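/- Sharpened Sundman inequality: for N point masses with total angular momentum H ≠ 0, letting ĥ = H/|H| and I_H = Σ m_i (|r_i|² − ⟨ĥ, r_i⟩²) be the moment of inertia about the axis ĥ, one has |H|² ≤ 2 I_H T, where T = (1/2) Σ m_i |v_i|². -/

import Mathlib

open RealInnerProductSpace

/-- The cross product of two vectors in Euclidean 3-space. -/
noncomputable def cross3 (a b : EuclideanSpace ℝ (Fin 3)) : EuclideanSpace ℝ (Fin 3) :=
  (WithLp.equiv 2 (Fin 3 → ℝ)).symm
    ![a 1 * b 2 - a 2 * b 1, a 2 * b 0 - a 0 * b 2, a 0 * b 1 - a 1 * b 0]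

/-!
Pair `H` with `a = ĥ`. Since `⟪a, r × v⟫ = ⟪a × r, v⟫`, we have
`|H| = ⟪a, H⟫ = Σ mᵢ ⟪a × rᵢ, vᵢ⟫`, whose square the weighted Cauchy–Schwarz inequality bounds
by `(Σ mᵢ |a × rᵢ|²) (Σ mᵢ |vᵢ|²)`; Lagrange's identity with `|a| ≤ 1` gives
`|a × rᵢ|² ≤ |rᵢ|² - ⟪a, rᵢ⟫²`, the squared distance of `rᵢ` from the axis.
-/

theorem Finset.sq_sum_mul_inner_le {ι E : Type*} [NormedAddCommGroup E] [InnerProductSpace ℝ E]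
    (s : Finset ι) {w : ι → ℝ} (hw : ∀ i ∈ s, 0 ≤ w i) (x y : ι → E) :
    (∑ i ∈ s, w i * ⟪x i, y i⟫) ^ 2 ≤
      (∑ i ∈ s, w i * ‖x i‖ ^ 2) * ∑ i ∈ s, w i * ‖y i‖ ^ 2 := by
  refine Finset.sum_sq_le_sum_mul_sum_of_sq_le_mul s
    (fun i hi => mul_nonneg (hw i hi) (sq_nonneg _))
    (fun i hi => mul_nonneg (hw i hi) (sq_nonneg _)) fun i _ => ?_
  have hxy : ⟪x i, y i⟫ ^ 2 ≤ ‖x i‖ ^ 2 * ‖y i‖ ^ 2 := by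
    rw [← mul_pow, ← sq_abs]
    exact pow_le_pow_left₀ (abs_nonneg _) (abs_real_inner_le_norm _ _) 2
  calc (w i * ⟪x i, y i⟫) ^ 2 = w i ^ 2 * ⟪x i, y i⟫ ^ 2 := mul_pow _ _ _
    _ ≤ w i ^ 2 * (‖x i‖ ^ 2 * ‖y i‖ ^ 2) := by gcongr
    _ = w i * ‖x i‖ ^ 2 * (w i * ‖y i‖ ^ 2) := by ring

theorem real_inner_cross3_right (a b c : EuclideanSpace ℝ (Fin 3)) :
    ⟪a, cross3 b c⟫ = ⟪cross3 a b, c⟫ := by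
  simp only [cross3, PiLp.inner_apply, RCLike.inner_apply, Fin.sum_univ_three,
    WithLp.equiv_symm_apply, Matrix.cons_val, conj_trivial]
  ring

theorem norm_cross3_sq (a b : EuclideanSpace ℝ (Fin 3)) :
    ‖cross3 a b‖ ^ 2 = ‖a‖ ^ 2 * ‖b‖ ^ 2 - ⟪a, b⟫ ^ 2 := by
  simp only [EuclideanSpace.norm_sq_eq, cross3, PiLp.inner_apply, RCLike.inner_apply,
    Fin.sum_univ_three, WithLp.equiv_symm_apply, Matrix.cons_val, conj_trivial,
    Real.norm_eq_abs, sq_abs]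
  ring

theorem real_inner_sum_smul_cross3 {ι : Type*} (s : Finset ι) (m : ι → ℝ)
    (r v : ι → EuclideanSpace ℝ (Fin 3)) (a : EuclideanSpace ℝ (Fin 3)) :
    ⟪a, ∑ i ∈ s, m i • cross3 (r i) (v i)⟫ = ∑ i ∈ s, m i * ⟪cross3 a (r i), v i⟫ := by
  simp only [inner_sum, real_inner_smul_right, real_inner_cross3_right]

theorem sq_real_inner_sum_smul_cross3_le {ι : Type*} (s : Finset ι) {m : ι → ℝ}
    (hm : ∀ i ∈ s, 0 ≤ m i) (r v : ι → EuclideanSpace ℝ (Fin 3))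
    {a : EuclideanSpace ℝ (Fin 3)} (ha : ‖a‖ ≤ 1) :
    ⟪a, ∑ i ∈ s, m i • cross3 (r i) (v i)⟫ ^ 2 ≤
      (∑ i ∈ s, m i * (‖r i‖ ^ 2 - ⟪a, r i⟫ ^ 2)) * ∑ i ∈ s, m i * ‖v i‖ ^ 2 := by
  have hdist (i : ι) : ‖cross3 a (r i)‖ ^ 2 ≤ ‖r i‖ ^ 2 - ⟪a, r i⟫ ^ 2 := by
    have : ‖a‖ ^ 2 ≤ 1 := pow_le_one₀ (norm_nonneg a) ha
    rw [norm_cross3_sq]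
    nlinarith [sq_nonneg ‖r i‖]
  calc _ = (∑ i ∈ s, m i * ⟪cross3 a (r i), v i⟫) ^ 2 := by
        rw [real_inner_sum_smul_cross3]
    _ ≤ (∑ i ∈ s, m i * ‖cross3 a (r i)‖ ^ 2) * ∑ i ∈ s, m i * ‖v i‖ ^ 2 :=
        s.sq_sum_mul_inner_le hm _ _
    _ ≤ _ := by
        gcongr with i hi
        · exact Finset.sum_nonneg fun i hi => mul_nonneg (hm i hi) (sq_nonneg _)
        · exact hm i hi
        · exact hdist i

theorem real_inner_inv_norm_smul_self {E : Type*} [NormedAddCommGroup E] [InnerProductSpace ℝ E]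
    (x : E) : ⟪‖x‖⁻¹ • x, x⟫ = ‖x‖ := by
  rw [real_inner_smul_left, real_inner_self_eq_norm_sq, sq, ← mul_assoc, inv_mul_mul_self]

theorem sharpened_sundman_inequality_general (N : ℕ) (m : Fin N → ℝ) (hm : ∀ i, 0 < m i)
    (r v : Fin N → EuclideanSpace ℝ (Fin 3))
    (H : EuclideanSpace ℝ (Fin 3))
    (hH : H = ∑ i, m i • cross3 (r i) (v i)) :
    ‖H‖ ^ 2 ≤
      2 * (∑ i, m i * (‖r i‖ ^ 2 - ⟪‖H‖⁻¹ • H, r i⟫ ^ 2)) *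
        ((1 / 2) * ∑ i, m i * ‖v i‖ ^ 2) := by
  have hunit : ‖‖H‖⁻¹ • H‖ ≤ 1 := by
    rw [norm_smul, norm_inv, norm_norm]
    exact inv_mul_le_one_of_le₀ le_rfl (norm_nonneg H)
  have key := sq_real_inner_sum_smul_cross3_le Finset.univ (fun i _ => (hm i).le) r v hunit
  rw [← hH, real_inner_inv_norm_smul_self] at key
  linarith

theorem sharpened_sundman_inequality (N : ℕ) (m : Fin N → ℝ) (hm : ∀ i, 0 < m i)
    (r v : Fin N → EuclideanSpace ℝ (Fin 3))
    (H : EuclideanSpace ℝ (Fin 3))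
    (hH : H = ∑ i, m i • cross3 (r i) (v i)) (hH0 : H ≠ 0) :
    ‖H‖ ^ 2 ≤
      2 * (∑ i, m i * (‖r i‖ ^ 2 - ⟪‖H‖⁻¹ • H, r i⟫ ^ 2)) *
        ((1 / 2) * ∑ i, m i * ‖v i‖ ^ 2) :=
  sharpened_sundman_inequality_general N m hm r v H hH
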